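/- The ordinary x-derivative of the q-Hermite polynomial satisfies x ∂_x H_n^{(q,1)}(x,y) = n H_n^{(q,1)}(x,y) - 2y [n]_q [n-1]_q H_{n-2}^{(q,1)}(x,y) for n ≥ 2. -/

import Mathlib

/-- The q-factorial `[n]_q! = ∏_{r=1}^n (1-q^r)/(1-q)`. -/
noncomputable def qFactorial (q : ℝ) (n : ℕ) : ℝ :=
  ∏ r ∈ Finset.Icc 1 n, (1 - q ^ r) / (1 - q)

/-- The two-variable q-Hermite polynomials `H_n^{(q,1)}(x,y)`. -/
noncomputable def qHermite (q : ℝ) (n : ℕ) (x y : ℝ) : ℝ :=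
  ∑ r ∈ Finset.range (n / 2 + 1),
    qFactorial q n * y ^ r * x ^ (n - 2 * r) / (qFactorial q (n - 2 * r) * r.factorial)

/-!
Since `x ∂ₓ xᵏ = k xᵏ`, applying `x ∂ₓ` to the `r`-th term of `H_n` multiplies it by `n - 2r`.
The part `-2r` reindexes to the lower polynomial: because `[n]_q! = [n]_q [n-1]_q [n-2]_q!` and
`r / r! = 1 / (r-1)!`, the `r`-th term of `H_n` times `r` is `y [n]_q [n-1]_q` times the `(r-1)`-st
term of `H_{n-2}`; both share the denominator `[n-2r]_q!`, so it never has to be cancelled.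
-/

open Finset

theorem mul_deriv_sum_monomial {ι : Type*} (s : Finset ι) (c : ι → ℝ) (e : ι → ℕ) (x : ℝ) :
    x * deriv (fun t : ℝ => ∑ i ∈ s, c i * t ^ e i) x = ∑ i ∈ s, (e i : ℝ) * (c i * x ^ e i) := by
  have hderiv : HasDerivAt (fun t : ℝ => ∑ i ∈ s, c i * t ^ e i)
      (∑ i ∈ s, c i * (e i * x ^ (e i - 1))) x :=
    HasDerivAt.fun_sum fun i _ => (hasDerivAt_pow (e i) x).const_mul (c i)
  rw [hderiv.deriv, mul_sum]
  refine sum_congr rfl fun i _ => ?_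
  rcases e i with _ | k
  · simp
  · rw [Nat.add_sub_cancel, pow_succ]
    ring

theorem qFactorial_succ (q : ℝ) (n : ℕ) :
    qFactorial q (n + 1) = qFactorial q n * ((1 - q ^ (n + 1)) / (1 - q)) :=
  prod_Icc_succ_top (Nat.le_add_left 1 n) _

noncomputable def qHermiteTerm (q : ℝ) (n : ℕ) (x y : ℝ) (r : ℕ) : ℝ :=
  qFactorial q n * y ^ r * x ^ (n - 2 * r) / (qFactorial q (n - 2 * r) * r.factorial)

theorem qHermite_eq_sum_qHermiteTerm (q : ℝ) (n : ℕ) (x y : ℝ) :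
    qHermite q n x y = ∑ r ∈ range (n / 2 + 1), qHermiteTerm q n x y r := rfl

theorem succ_mul_qHermiteTerm_succ (q : ℝ) (m : ℕ) (x y : ℝ) (i : ℕ) :
    (i + 1 : ℝ) * qHermiteTerm q (m + 2) x y (i + 1)
      = y * ((1 - q ^ (m + 2)) / (1 - q)) * ((1 - q ^ (m + 1)) / (1 - q))
          * qHermiteTerm q m x y i := by
  have hexp : m + 2 - 2 * (i + 1) = m - 2 * i := by omega
  have hi : (i + 1 : ℝ) ≠ 0 := by positivity
  simp only [qHermiteTerm, hexp, qFactorial_succ, Nat.factorial_succ, Nat.cast_mul, Nat.cast_succ]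
  field_simp
  ring

theorem sum_index_mul_qHermiteTerm (q : ℝ) (n : ℕ) (x y : ℝ) :
    ∑ r ∈ range (n / 2 + 1), (r : ℝ) * qHermiteTerm q n x y r
      = y * ((1 - q ^ n) / (1 - q)) * ((1 - q ^ (n - 1)) / (1 - q)) * qHermite q (n - 2) x y := by
  obtain _ | _ | m := n
  · simp
  · simp
  · rw [show (m + 2) / 2 + 1 = m / 2 + 1 + 1 by omega, sum_range_succ',
      qHermite_eq_sum_qHermiteTerm, mul_sum]
    push_cast
    simp only [zero_mul, add_zero, succ_mul_qHermiteTerm_succ]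

theorem qHermite_x_derivative_general (q : ℝ) (n : ℕ) (x y : ℝ) :
    x * deriv (fun t : ℝ => qHermite q n t y) x
      = (n : ℝ) * qHermite q n x y
        - 2 * y * ((1 - q ^ n) / (1 - q)) * ((1 - q ^ (n - 1)) / (1 - q)) *
            qHermite q (n - 2) x y := by
  have hmonomial : ∀ t r, qHermiteTerm q n t y r
      = qFactorial q n * y ^ r / (qFactorial q (n - 2 * r) * r.factorial) * t ^ (n - 2 * r) :=
    fun t r => mul_div_right_comm _ _ _
  have hexp : ∀ r ∈ range (n / 2 + 1), ((n - 2 * r : ℕ) : ℝ) * qHermiteTerm q n x y r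
      = n * qHermiteTerm q n x y r - 2 * (r * qHermiteTerm q n x y r) := by
    intro r hr
    rw [Nat.cast_sub (by have := mem_range.mp hr; omega)]
    push_cast
    ring
  simp only [qHermite_eq_sum_qHermiteTerm, hmonomial, mul_deriv_sum_monomial]
  simp only [← hmonomial]
  rw [sum_congr rfl hexp, sum_sub_distrib, ← mul_sum, ← mul_sum, sum_index_mul_qHermiteTerm,
    qHermite_eq_sum_qHermiteTerm]
  ring

theorem qHermite_x_derivative (q : ℝ) (hq0 : 0 < q) (hq1 : q < 1)
    (n : ℕ) (hn : 2 ≤ n) (x y : ℝ) :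
    x * deriv (fun t : ℝ => qHermite q n t y) x
      = (n : ℝ) * qHermite q n x y
        - 2 * y * ((1 - q ^ n) / (1 - q)) * ((1 - q ^ (n - 1)) / (1 - q)) *
            qHermite q (n - 2) x y :=
  qHermite_x_derivative_general q n x y
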